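/- Gradient of the Newtonian potential of a uniform ball at an exterior point: for x ∈ ℝ³ with ‖x‖ = a > R, ∇_x ∫_{B_R(0)} dy/‖x − y‖ = −(4π/3) R³ x/‖x‖³. -/

import Mathlib

open MeasureTheory Real Metric Set Filter Topology

/-!
Outside the ball the potential is that of a point mass at the origin (Newton's shell theorem):
`∫_{B_R} ‖z - y‖⁻¹ dy = (4π/3) R³ / ‖z‖` whenever `‖z‖ > R`, so near `x` the gradient is that of
`c ‖z‖⁻¹`. To compute the integral, rotate `z` onto the first axis and slice the ball by the planes
orthogonal to it: each slice is a disc, on which the integrand is radial and integrates elementarily,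
and the remaining integral over the height of the slice is elementary as well.
-/

theorem integral_mul_inv_sqrt_sq_add_sq {b : ℝ} (hb : 0 < b) (s : ℝ) :
    ∫ r in (0 : ℝ)..s, r * (√(b ^ 2 + r ^ 2))⁻¹ = √(b ^ 2 + s ^ 2) - b := by
  have hpos : ∀ r : ℝ, 0 < b ^ 2 + r ^ 2 := fun r => by positivity
  have hderiv : ∀ r ∈ uIcc 0 s,
      HasDerivAt (fun r => √(b ^ 2 + r ^ 2)) (r * (√(b ^ 2 + r ^ 2))⁻¹) r := by
    intro r _
    convert ((hasDerivAt_pow 2 r).const_add (b ^ 2)).sqrt (hpos r).ne' using 1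
    field_simp
    ring
  have hcont : Continuous fun r : ℝ => r * (√(b ^ 2 + r ^ 2))⁻¹ :=
    continuous_id.mul ((by fun_prop : Continuous fun r : ℝ => √(b ^ 2 + r ^ 2)).inv₀
      fun r => (sqrt_pos.2 (hpos r)).ne')
  rw [intervalIntegral.integral_eq_sub_of_hasDerivAt hderiv (hcont.intervalIntegrable _ _)]
  simp [sqrt_sq hb.le]

theorem integral_sqrt_sq_sub_two_mul_add_sq_sub {a R : ℝ} (hR : 0 < R) (hRa : R < a) :
    ∫ t in -R..R, (√(a ^ 2 - 2 * a * t + R ^ 2) - (a - t)) = 2 * R ^ 3 / (3 * a) := by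
  have ha : 0 < a := hR.trans hRa
  let Φ : ℝ → ℝ := fun t =>
    -((a ^ 2 - 2 * a * t + R ^ 2) * √(a ^ 2 - 2 * a * t + R ^ 2) / (3 * a)) - a * t + t ^ 2 / 2
  have hderiv : ∀ t ∈ uIcc (-R) R,
      HasDerivAt Φ (√(a ^ 2 - 2 * a * t + R ^ 2) - (a - t)) t := by
    intro t ht
    rw [uIcc_of_le (by linarith)] at ht
    have hq : 0 < a ^ 2 - 2 * a * t + R ^ 2 := by nlinarith [ht.1, ht.2]
    have hlin : HasDerivAt (fun t : ℝ => a ^ 2 - 2 * a * t + R ^ 2) (-(2 * a)) t := by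
      simpa using (((hasDerivAt_id t).const_mul (2 * a)).const_sub (a ^ 2)).add_const (R ^ 2)
    have h := (((hlin.mul (hlin.sqrt hq.ne')).div_const (3 * a)).neg.sub
      ((hasDerivAt_id t).const_mul a)).add ((hasDerivAt_pow 2 t).div_const 2)
    refine h.congr_deriv ?_
    have hsq := mul_self_sqrt hq.le
    have hs : √(a ^ 2 - 2 * a * t + R ^ 2) ≠ 0 := (sqrt_pos.2 hq).ne'
    generalize √(a ^ 2 - 2 * a * t + R ^ 2) = s at hsq hs ⊢
    field_simp
    linear_combination -2 * hsq
  have hcont : Continuous fun t : ℝ => √(a ^ 2 - 2 * a * t + R ^ 2) - (a - t) := by fun_prop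
  rw [intervalIntegral.integral_eq_sub_of_hasDerivAt hderiv (hcont.intervalIntegrable _ _)]
  have hminus : a ^ 2 - 2 * a * R + R ^ 2 = (a - R) ^ 2 := by ring
  have hplus : a ^ 2 - 2 * a * -R + R ^ 2 = (a + R) ^ 2 := by ring
  simp only [Φ, hminus, hplus, sqrt_sq (by linarith : 0 ≤ a - R), sqrt_sq (by linarith : 0 ≤ a + R)]
  field_simp
  ring

theorem integral_ball_inv_sqrt_sq_add_norm_sq {b ρ : ℝ} (hb : 0 < b) (hρ : 0 ≤ ρ) :
    ∫ w in ball (0 : EuclideanSpace ℝ (Fin 2)) ρ, (√(b ^ 2 + ‖w‖ ^ 2))⁻¹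
      = 2 * π * (√(b ^ 2 + ρ ^ 2) - b) := by
  have hradial : (ball (0 : EuclideanSpace ℝ (Fin 2)) ρ).indicator
      (fun w => (√(b ^ 2 + ‖w‖ ^ 2))⁻¹)
      = fun w => (Iio ρ).indicator (fun r => (√(b ^ 2 + r ^ 2))⁻¹) ‖w‖ := by
    ext w
    simp [indicator]
  have hIoi : ∫ r in Ioi 0, r ^ (2 - 1) • (Iio ρ).indicator (fun r => (√(b ^ 2 + r ^ 2))⁻¹) r
      = ∫ r in (0 : ℝ)..ρ, r * (√(b ^ 2 + r ^ 2))⁻¹ := by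
    simp_rw [← indicator_smul_apply (Iio ρ) (fun r : ℝ => r ^ (2 - 1))]
    rw [setIntegral_indicator measurableSet_Iio, Ioi_inter_Iio, intervalIntegral.integral_of_le hρ,
      integral_Ioc_eq_integral_Ioo]
    simp
  rw [← integral_indicator measurableSet_ball, hradial, integral_fun_norm_addHaar,
    finrank_euclideanSpace_fin, hIoi, integral_mul_inv_sqrt_sq_add_sq hb]
  simp [measureReal_def, pi_pos.le]
  ring

theorem setIntegral_ball_comp_norm_sub_eq_of_norm_eq {E F : Type*} [NormedAddCommGroup E]
    [InnerProductSpace ℝ E] [FiniteDimensional ℝ E] [MeasurableSpace E] [BorelSpace E]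
    [NormedAddCommGroup F] [NormedSpace ℝ F] (g : ℝ → F) (R : ℝ) {u z : E} (h : ‖u‖ = ‖z‖) :
    ∫ y in ball (0 : E) R, g ‖z - y‖ = ∫ y in ball (0 : E) R, g ‖u - y‖ := by
  let T := Submodule.reflection (ℝ ∙ (u - z))ᗮ
  have hTu : T u = z := Submodule.reflection_sub h
  have hpre : T ⁻¹' ball 0 R = ball 0 R := by
    ext y
    simp [T]
  rw [← T.measurePreserving.setIntegral_preimage_emb T.toHomeomorph.measurableEmbedding, hpre,
    ← hTu]
  simp_rw [← map_sub, LinearIsometryEquiv.norm_map]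

theorem integrableOn_ball_inv_norm_sub {E : Type*} [NormedAddCommGroup E] [ProperSpace E]
    [MeasurableSpace E] [BorelSpace E] (μ : Measure E) [IsFiniteMeasureOnCompacts μ]
    {R : ℝ} {z : E} (hz : R < ‖z‖) :
    IntegrableOn (fun y => ‖z - y‖⁻¹) (ball 0 R) μ := by
  refine (ContinuousOn.integrableOn_compact (isCompact_closedBall 0 R) ?_).mono_set
    ball_subset_closedBall
  refine (by fun_prop : Continuous fun y : E => ‖z - y‖).continuousOn.inv₀ fun y hy => ?_
  rw [mem_closedBall_zero_iff] at hy
  have := norm_sub_norm_le z y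
  linarith

namespace EuclideanSpace

noncomputable def splitFirst (n : ℕ) :
    EuclideanSpace ℝ (Fin (n + 1)) ≃ᵐ ℝ × EuclideanSpace ℝ (Fin n) :=
  (MeasurableEquiv.toLp 2 _).symm.trans <|
    (MeasurableEquiv.piFinSuccAbove (fun _ => ℝ) 0).trans <|
      (MeasurableEquiv.refl ℝ).prodCongr (MeasurableEquiv.toLp 2 _)

theorem measurePreserving_splitFirst (n : ℕ) : MeasurePreserving (splitFirst n) := by
  refine (PiLp.volume_preserving_ofLp _).trans ((volume_preserving_piFinSuccAbove _ 0).trans ?_)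
  rw [Measure.volume_eq_prod, Measure.volume_eq_prod]
  exact (MeasurePreserving.id volume).prod (PiLp.volume_preserving_toLp _)

theorem splitFirst_apply {n : ℕ} (y : EuclideanSpace ℝ (Fin (n + 1))) :
    splitFirst n y = (y 0, WithLp.toLp 2 (Fin.tail y.ofLp)) := by
  simp [splitFirst, MeasurableEquiv.piFinSuccAbove, MeasurableEquiv.prodCongr]

theorem norm_sq_eq_splitFirst {n : ℕ} (y : EuclideanSpace ℝ (Fin (n + 1))) :
    ‖y‖ ^ 2 = (splitFirst n y).1 ^ 2 + ‖(splitFirst n y).2‖ ^ 2 := by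
  simp [splitFirst_apply, EuclideanSpace.norm_sq_eq, Fin.sum_univ_succ, Fin.tail]

theorem norm_sq_splitFirst_symm {n : ℕ} (p : ℝ × EuclideanSpace ℝ (Fin n)) :
    ‖(splitFirst n).symm p‖ ^ 2 = p.1 ^ 2 + ‖p.2‖ ^ 2 := by
  simpa using norm_sq_eq_splitFirst ((splitFirst n).symm p)

theorem splitFirst_sub {n : ℕ} (y z : EuclideanSpace ℝ (Fin (n + 1))) :
    splitFirst n (y - z) = splitFirst n y - splitFirst n z := by
  ext <;> simp [splitFirst_apply, Fin.tail]

theorem splitFirst_symm_sub {n : ℕ} (p q : ℝ × EuclideanSpace ℝ (Fin n)) :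
    (splitFirst n).symm (p - q) = (splitFirst n).symm p - (splitFirst n).symm q := by
  apply (splitFirst n).injective
  simp only [splitFirst_sub, MeasurableEquiv.apply_symm_apply]

end EuclideanSpace

open EuclideanSpace

local notation "ℝ³" => EuclideanSpace ℝ (Fin 3)

theorem integral_indicator_ball_inv_norm_sub_splitFirst_symm {R a : ℝ} (hR : 0 < R)
    (hRa : R < a) (t : ℝ) :
    ∫ w, (ball (0 : ℝ³) R).indicator (fun y => ‖(splitFirst 2).symm (a, 0) - y‖⁻¹)
        ((splitFirst 2).symm (t, w))
      = (Ioo (-R) R).indicator (fun t => 2 * π * (√(a ^ 2 - 2 * a * t + R ^ 2) - (a - t))) t := by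
  have hdist : ∀ w, ‖(splitFirst 2).symm (a, 0) - (splitFirst 2).symm (t, w)‖
      = √((a - t) ^ 2 + ‖w‖ ^ 2) := by
    intro w
    rw [← splitFirst_symm_sub, ← sqrt_sq (norm_nonneg _), norm_sq_splitFirst_symm]
    simp
  have hmem : ∀ w, (splitFirst 2).symm (t, w) ∈ ball (0 : ℝ³) R ↔ t ^ 2 + ‖w‖ ^ 2 < R ^ 2 := by
    intro w
    rw [mem_ball_zero_iff, ← pow_lt_pow_iff_left₀ (norm_nonneg _) hR.le two_ne_zero,
      norm_sq_splitFirst_symm]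
  by_cases ht : t ∈ Ioo (-R) R
  · have ht2 : t ^ 2 < R ^ 2 := sq_lt_sq' ht.1 ht.2
    have hslice : ∀ w, (ball (0 : ℝ³) R).indicator (fun y => ‖(splitFirst 2).symm (a, 0) - y‖⁻¹)
        ((splitFirst 2).symm (t, w))
        = (ball 0 √(R ^ 2 - t ^ 2)).indicator (fun w => (√((a - t) ^ 2 + ‖w‖ ^ 2))⁻¹) w := by
      intro w
      have hw : t ^ 2 + ‖w‖ ^ 2 < R ^ 2 ↔ w ∈ ball 0 √(R ^ 2 - t ^ 2) := by
        rw [mem_ball_zero_iff, lt_sqrt (norm_nonneg _)]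
        constructor <;> intro <;> linarith
      classical
      simp only [indicator_apply, hmem, hw, hdist]
    rw [integral_congr_ae (.of_forall hslice), integral_indicator measurableSet_ball,
      integral_ball_inv_sqrt_sq_add_norm_sq (by linarith [ht.2]) (sqrt_nonneg _),
      sq_sqrt (by linarith), indicator_of_mem ht]
    ring_nf
  · have hslice : ∀ w, (ball (0 : ℝ³) R).indicator (fun y => ‖(splitFirst 2).symm (a, 0) - y‖⁻¹)
        ((splitFirst 2).symm (t, w)) = 0 := by
      intro w
      refine indicator_of_notMem (fun hw => ht ?_) _
      have : t ^ 2 < R ^ 2 := by nlinarith [(hmem w).1 hw, sq_nonneg ‖w‖]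
      exact abs_lt.1 (abs_lt_of_sq_lt_sq this hR.le)
    simp [hslice, indicator_of_notMem ht]

theorem integral_ball_inv_norm_sub_of_lt_norm {R : ℝ} (hR : 0 < R) {z : ℝ³} (hz : R < ‖z‖) :
    ∫ y in ball (0 : ℝ³) R, ‖z - y‖⁻¹ = 4 * π / 3 * R ^ 3 * ‖z‖⁻¹ := by
  set a := ‖z‖
  have ha : 0 < a := hR.trans hz
  let ψ := splitFirst 2
  set u : ℝ³ := ψ.symm (a, 0)
  have hu : ‖u‖ = a := by
    rw [← sqrt_sq (norm_nonneg u), norm_sq_splitFirst_symm]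
    simp [ha.le]
  have hψ := (measurePreserving_splitFirst 2).symm
  have hint : Integrable fun p => (ball 0 R).indicator (fun y => ‖u - y‖⁻¹) (ψ.symm p) :=
    (hψ.integrable_comp_emb ψ.symm.measurableEmbedding).2
      ((integrableOn_ball_inv_norm_sub volume (hu ▸ hz)).integrable_indicator measurableSet_ball)
  rw [Measure.volume_eq_prod] at hint
  calc ∫ y in ball 0 R, ‖z - y‖⁻¹
      = ∫ y in ball 0 R, ‖u - y‖⁻¹ := setIntegral_ball_comp_norm_sub_eq_of_norm_eq (·⁻¹) R hu
    _ = ∫ p, (ball 0 R).indicator (fun y => ‖u - y‖⁻¹) (ψ.symm p) := by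
        rw [← integral_indicator measurableSet_ball,
          hψ.integral_comp ψ.symm.measurableEmbedding]
    _ = ∫ t, ∫ w, (ball 0 R).indicator (fun y => ‖u - y‖⁻¹) (ψ.symm (t, w)) := by
        rw [Measure.volume_eq_prod, integral_prod _ hint]
    _ = ∫ t, (Ioo (-R) R).indicator
          (fun t => 2 * π * (√(a ^ 2 - 2 * a * t + R ^ 2) - (a - t))) t :=
        integral_congr_ae (.of_forall (integral_indicator_ball_inv_norm_sub_splitFirst_symm hR hz))
    _ = 4 * π / 3 * R ^ 3 * a⁻¹ := by
        rw [integral_indicator measurableSet_Ioo, ← integral_Ioc_eq_integral_Ioo,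
          ← intervalIntegral.integral_of_le (by linarith), intervalIntegral.integral_const_mul,
          integral_sqrt_sq_sub_two_mul_add_sq_sub hR hz]
        field_simp
        ring

theorem hasGradientAt_const_mul_inv_norm {F : Type*} [NormedAddCommGroup F]
    [InnerProductSpace ℝ F] [CompleteSpace F] (c : ℝ) {x : F} (hx : x ≠ 0) :
    HasGradientAt (fun z : F => c * ‖z‖⁻¹) ((-c / ‖x‖ ^ 3) • x) x := by
  have hnorm : 0 < ‖x‖ := norm_pos_iff.2 hx
  have hsq := (hasStrictFDerivAt_norm_sq x).hasFDerivAt.sqrt (by positivity)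
  simp only [sqrt_sq (norm_nonneg _)] at hsq
  rw [hasGradientAt_iff_hasFDerivAt]
  refine (((hasDerivAt_inv hnorm.ne').comp_hasFDerivAt x hsq).const_mul c).congr_fderiv ?_
  ext w
  simp
  field_simp

/-- Gradient of the Newtonian potential of a uniform ball at an exterior point:
`∇_x ∫_{B_R(0)} dy/‖x−y‖ = −(4π/3) R³ x/‖x‖³`. -/
theorem gradient_newtonian_potential_exterior {R : ℝ} (hR : 0 < R)
    (x : EuclideanSpace ℝ (Fin 3)) (hx : R < ‖x‖) :
    gradient (fun z => ∫ y in Metric.ball (0 : EuclideanSpace ℝ (Fin 3)) R, ‖z - y‖⁻¹) x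
      = (-(4 * π / 3) * R ^ 3 / ‖x‖ ^ 3) • x := by
  have hx0 : x ≠ 0 := norm_pos_iff.1 (hR.trans hx)
  have hshell : (fun z => ∫ y in ball (0 : ℝ³) R, ‖z - y‖⁻¹)
      =ᶠ[𝓝 x] fun z => 4 * π / 3 * R ^ 3 * ‖z‖⁻¹ :=
    eventually_of_mem ((isOpen_lt continuous_const continuous_norm).mem_nhds hx) fun _ hz =>
      integral_ball_inv_norm_sub_of_lt_norm hR hz
  rw [hshell.gradient_eq, (hasGradientAt_const_mul_inv_norm _ hx0).gradient]
  ring_nf
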